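/- Let Γ be a finite simple graph and 𝒢 = {G_v}, 𝒢' = {G'_v} collections of countable groups with |G_v| ≤ |G'_v| ≤ ∞ for every vertex v. Then KP_0(Γ,𝒢) embeds into KP_0(Γ,𝒢'). -/

import Mathlib

open Monoid
open scoped commutatorElement

variable {V : Type*} (Γ : SimpleGraph V) (G : V → Type*) [∀ v, Group (G v)]

/-- The defining relators of the graph product: commutators of elements of
vertex groups attached to adjacent vertices. -/
def graphProductRels : Set (Monoid.CoprodI G) :=
  {x | ∃ (u v : V) (g : G u) (h : G v), Γ.Adj u v ∧
        x = ⁅Monoid.CoprodI.of g, Monoid.CoprodI.of h⁆}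

/-- The graph product of the groups `G v` over the graph `Γ`. -/
def GraphProduct : Type _ :=
  Monoid.CoprodI G ⧸ Subgroup.normalClosure (graphProductRels Γ G)

instance : Group (GraphProduct Γ G) :=
  QuotientGroup.Quotient.group _

/-- The canonical map from a vertex group into the graph product. -/
def GraphProduct.of (v : V) : G v →* GraphProduct Γ G :=
  (QuotientGroup.mk' _).comp Monoid.CoprodI.of

/-- The natural projection from the graph product onto the direct product of the
vertex groups. -/
def GraphProduct.proj [DecidableEq V] : GraphProduct Γ G →* ((v : V) → G v) :=
  QuotientGroup.lift _ (Monoid.CoprodI.lift fun v => MonoidHom.mulSingle G v)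
    (Subgroup.normalClosure_le_normal <| by
      rintro x ⟨u, v, g, h, hadj, rfl⟩
      have huv : u ≠ v := hadj.ne
      simp only [SetLike.mem_coe, MonoidHom.mem_ker, map_commutatorElement,
        Monoid.CoprodI.lift_of]
      exact commutatorElement_eq_one_iff_commute.mpr
        (Pi.mulSingle_commute huv g h))

/-- The graph product kernel: the kernel of the natural surjection onto the
direct product of the vertex groups. -/
def GraphProductKernel [DecidableEq V] : Subgroup (GraphProduct Γ G) :=
  MonoidHom.ker (GraphProduct.proj Γ G)

/-
Any family of maps `τ v : G v → G' v`, homomorphisms or not, induces a homomorphism from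
`GraphProduct Γ G` into the regular wreath product `GraphProduct Γ G' ≀ᵣ ∏ v, G v` sending
`g ∈ G v` to `(x ↦ of (τ (x v) * (τ (g⁻¹ * x v))⁻¹), Pi.mulSingle v g)`: the first coordinate
is a cocycle for the translation action, and the relations of the graph product hold because
only the coordinate `v` moves. The second coordinate is the projection, so on the kernel,
evaluating the first coordinate at a point is a homomorphism; its values lie in the kernel
for `G'` because their projections telescope to `τ x * (τ x)⁻¹`. Applying this to injections
`σ v` and then to left inverses `ρ v` (at the image point) gives back every element, so the
map for `σ` is injective.
-/

namespace GraphProduct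

variable {G}

theorem of_commute {u v : V} (h : Γ.Adj u v) (g : G u) (g' : G v) :
    Commute (of Γ G u g) (of Γ G v g') := by
  rw [← commutatorElement_eq_one_iff_commute]
  exact (QuotientGroup.eq_one_iff _).mpr (Subgroup.subset_normalClosure ⟨u, v, g, g', h, rfl⟩)

theorem induction_on {motive : GraphProduct Γ G → Prop} (x : GraphProduct Γ G)
    (one : motive 1) (of : ∀ v (g : G v), motive (of Γ G v g))
    (mul : ∀ x y, motive x → motive y → motive (x * y)) : motive x := by
  induction x using QuotientGroup.induction_on with | H z => ?_
  induction z using CoprodI.induction_on with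
  | one => exact one
  | of v g => exact of v g
  | mul z w hz hw => exact mul _ _ hz hw

def lift {M : Type*} [Group M] (f : ∀ v, G v →* M)
    (hf : ∀ u v, Γ.Adj u v → ∀ (g : G u) (h : G v), Commute (f u g) (f v h)) :
    GraphProduct Γ G →* M :=
  QuotientGroup.lift _ (CoprodI.lift f) <| Subgroup.normalClosure_le_normal <| by
    rintro _ ⟨u, v, g, h, huv, rfl⟩
    simp only [SetLike.mem_coe, MonoidHom.mem_ker, map_commutatorElement, CoprodI.lift_of]
    exact commutatorElement_eq_one_iff_commute.mpr (hf u v huv g h)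

@[simp]
theorem lift_of {M : Type*} [Group M] (f : ∀ v, G v →* M)
    (hf : ∀ u v, Γ.Adj u v → ∀ (g : G u) (h : G v), Commute (f u g) (f v h)) (v : V) (g : G v) :
    lift Γ f hf (of Γ G v g) = f v g :=
  CoprodI.lift_of f g

@[simp]
theorem proj_of [DecidableEq V] (v : V) (g : G v) : proj Γ G (of Γ G v g) = Pi.mulSingle v g :=
  CoprodI.lift_of (fun v => MonoidHom.mulSingle G v) g

open Function

variable [DecidableEq V] {G' : V → Type*} [∀ v, Group (G' v)] (τ : ∀ v, G v → G' v)

def twistOf (v : V) : G v →* GraphProduct Γ G' ≀ᵣ (∀ v, G v) where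
  toFun g := ⟨fun x => of Γ G' v (τ v (x v) * (τ v (g⁻¹ * x v))⁻¹), Pi.mulSingle v g⟩
  map_one' := by ext <;> simp
  map_mul' g h := by
    ext x
    · simp only [RegularWreathProduct.mul_left, Pi.mul_apply, Pi.inv_apply, Pi.mulSingle_eq_same,
        ← map_mul, mul_inv_rev, mul_assoc, inv_mul_cancel_left]
    · simp [Pi.mulSingle_mul]

theorem twistOf_commute {u v : V} (huv : Γ.Adj u v) (a : G u) (b : G v) :
    Commute (twistOf Γ τ u a) (twistOf Γ τ v b) := by
  ext : 1
  · funext x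
    simp only [twistOf, MonoidHom.coe_mk, OneHom.coe_mk, RegularWreathProduct.mul_left,
      Pi.mul_apply, Pi.inv_apply, Pi.mulSingle_eq_of_ne huv.ne, Pi.mulSingle_eq_of_ne huv.ne.symm,
      inv_one, one_mul]
    exact (of_commute (G := G') Γ huv _ _).eq
  · exact (Pi.mulSingle_commute huv.ne a b).eq

def twist : GraphProduct Γ G →* GraphProduct Γ G' ≀ᵣ (∀ v, G v) :=
  lift Γ (twistOf Γ τ) fun _ _ huv => twistOf_commute Γ τ huv

@[simp]
theorem twist_of (v : V) (g : G v) : twist Γ τ (of Γ G v g) = twistOf Γ τ v g :=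
  lift_of Γ _ _ v g

theorem twist_right (x : GraphProduct Γ G) : (twist Γ τ x).right = proj Γ G x := by
  induction x using induction_on with
  | one => simp
  | of v g => simp [twistOf]
  | mul x y hx hy => simp [hx, hy]

theorem twist_mul_left (x y : GraphProduct Γ G) (p : ∀ v, G v) :
    (twist Γ τ (x * y)).left p =
      (twist Γ τ x).left p * (twist Γ τ y).left ((proj Γ G x)⁻¹ * p) := by
  rw [map_mul, RegularWreathProduct.mul_left, twist_right]
  rfl

theorem proj_twist_left (x : GraphProduct Γ G) (p : ∀ v, G v) :
    proj Γ G' ((twist Γ τ x).left p) = Pi.map τ p * (Pi.map τ ((proj Γ G x)⁻¹ * p))⁻¹ := by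
  induction x using induction_on generalizing p with
  | one => simp
  | of v g =>
    ext u
    rcases eq_or_ne u v with rfl | huv
    · simp [twistOf]
    · simp [twistOf, huv]
  | mul x y hx hy =>
    rw [twist_mul_left, map_mul, hx, hy]
    simp [mul_assoc]

def kernelMap (p : ∀ v, G v) : GraphProductKernel Γ G →* GraphProductKernel Γ G' where
  toFun k := ⟨(twist Γ τ k).left p, by
    rw [GraphProductKernel, MonoidHom.mem_ker, proj_twist_left, MonoidHom.mem_ker.mp k.2]
    simp⟩
  map_one' := by ext; simp
  map_mul' k l := Subtype.ext <| by
    simp only [Subgroup.coe_mul, twist_mul_left, MonoidHom.mem_ker.mp k.2, inv_one, one_mul]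

theorem twist_left_twist_left {σ : ∀ v, G v → G' v} {ρ : ∀ v, G' v → G v}
    (hρσ : ∀ v, LeftInverse (ρ v) (σ v)) (x : GraphProduct Γ G) (p : ∀ v, G v) :
    (twist Γ ρ ((twist Γ σ x).left p)).left (Pi.map σ p) = x := by
  induction x using induction_on generalizing p with
  | one => simp
  | of v g => simp [twistOf, hρσ v _]
  | mul x y hx hy =>
    rw [twist_mul_left, twist_mul_left, hx, proj_twist_left, mul_inv_rev, inv_inv,
      inv_mul_cancel_right, hy]

theorem kernelMap_leftInverse {σ : ∀ v, G v → G' v} {ρ : ∀ v, G' v → G v}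
    (hρσ : ∀ v, LeftInverse (ρ v) (σ v)) (p : ∀ v, G v) :
    LeftInverse (kernelMap Γ ρ (Pi.map σ p)) (kernelMap Γ σ p) :=
  fun k => Subtype.ext (twist_left_twist_left Γ hρσ k p)

theorem kernelMap_injective {σ : ∀ v, G v → G' v} (hσ : ∀ v, Injective (σ v)) (p : ∀ v, G v) :
    Injective (kernelMap Γ σ p) :=
  (kernelMap_leftInverse Γ (fun v => leftInverse_invFun (hσ v)) p).injective

end GraphProduct

theorem graphProductKernel_embeds_of_card_le_general
    {V : Type*} [DecidableEq V] (Γ : SimpleGraph V)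
    (G G' : V → Type*) [∀ v, Group (G v)] [∀ v, Group (G' v)]
    (hcard : ∀ v, Nonempty (G v ↪ G' v)) :
    ∃ f : (GraphProductKernel Γ G) →* (GraphProductKernel Γ G'),
      Function.Injective f := by
  let θ v := (hcard v).some
  exact ⟨GraphProduct.kernelMap Γ (fun v => θ v) 1,
    GraphProduct.kernelMap_injective Γ (fun v => (θ v).injective) 1⟩

/-- Let `Γ` be a finite simple graph and `𝒢 = {G v}`, `𝒢' = {G' v}` collections of
countable groups with `|G v| ≤ |G' v| ≤ ∞` for every vertex `v`.  Then `KP_0(Γ,𝒢)`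
embeds into `KP_0(Γ,𝒢')`. -/
theorem graphProductKernel_embeds_of_card_le
    {V : Type*} [Finite V] [DecidableEq V] (Γ : SimpleGraph V)
    (G G' : V → Type*) [∀ v, Group (G v)] [∀ v, Group (G' v)]
    [∀ v, Countable (G v)] [∀ v, Countable (G' v)]
    (hcard : ∀ v, Nonempty (G v ↪ G' v)) :
    ∃ f : (GraphProductKernel Γ G) →* (GraphProductKernel Γ G'),
      Function.Injective f :=
  graphProductKernel_embeds_of_card_le_general Γ G G' hcard
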